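/- Let α, β, γ ∈ ℝ and let U, V : ℝ → ℝ be twice continuously differentiable even functions satisfying -U''(r) + U(r) = α·U(r)³ + β·U(r)·V(r)² and -V''(r) + V(r) = γ·V(r)³ + β·U(r)²·V(r) for all r ∈ ℝ, and suppose there exist constants C, η > 0 such that |U(r)| + |U'(r)| + |V(r)| + |V'(r)| ≤ C·e^{-η|r|} for all r ∈ ℝ. Then -∫₀^∞ |U'(r)|² dr + ∫₀^∞ U(r)² dr = (1/2)·α·∫₀^∞ U(r)⁴ dr - 2β·∫₀^∞ r·U(r)·U'(r)·V(r)² dr. -/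

import Mathlib

/-!
Pohozaev argument for the first equation: along the ODE, `H r = r * (U² - U'² - α/2 U⁴)` has
derivative `U² - U'² - α/2 U⁴ + 2β r U U' V²`, since substituting `U''` from the equation
cancels every term of `r * d/dr (U² - U'² - α/2 U⁴)` except the coupling term. As `H 0 = 0`
and `H` decays exponentially, the integral of this derivative over `(0, ∞)` vanishes.
-/

open MeasureTheory Set Filter Asymptotics Real Topology

lemma hasDerivAt_id_mul_energy {u u' u'' : ℝ → ℝ} {r : ℝ} (α : ℝ)
    (hu : HasDerivAt u (u' r) r) (hu' : HasDerivAt u' (u'' r) r) :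
    HasDerivAt (fun s => s * (u s ^ 2 - u' s ^ 2 - α / 2 * u s ^ 4))
      (u r ^ 2 - u' r ^ 2 - α / 2 * u r ^ 4 + 2 * (r * u' r * (u r - u'' r - α * u r ^ 3)))
      r := by
  refine ((hasDerivAt_id' r).mul
    (((hu.pow 2).fun_sub (hu'.pow 2)).fun_sub ((hu.pow 4).const_mul (α / 2)))).congr_deriv ?_
  simp only [Pi.pow_apply, Nat.cast_ofNat, one_mul]
  ring

lemma isBigO_exp_neg_mul_of_abs_le {f : ℝ → ℝ} {C η : ℝ}
    (h : ∀ r, |f r| ≤ C * exp (-η * |r|)) : f =O[atTop] fun r => exp (-η * r) := by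
  refine IsBigO.of_bound C ?_
  filter_upwards [eventually_ge_atTop 0] with r hr
  simpa [abs_of_nonneg hr] using h r

section ExpDecay

variable {η : ℝ} (hη : 0 < η)
include hη

lemma tendsto_exp_neg_mul_atTop : Tendsto (fun r => exp (-η * r)) atTop (𝓝 0) :=
  tendsto_exp_atBot.comp (tendsto_id.const_mul_atTop_of_neg (neg_neg_of_pos hη))

lemma exp_neg_mul_sq_isBigO : (fun r => exp (-η * r) ^ 2) =O[atTop] fun r => exp (-η * r) := by
  simpa only [sq, mul_one] using
    (isBigO_refl (fun r => exp (-η * r)) atTop).mul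
      ((tendsto_exp_neg_mul_atTop hη).isBigO_one ℝ)

lemma id_mul_exp_neg_mul_sq_isBigO :
    (fun r => r * exp (-η * r) ^ 2) =O[atTop] fun r => exp (-η * r) := by
  have h : Tendsto (fun r => r * exp (-η * r)) atTop (𝓝 0) := by
    simpa only [rpow_one] using tendsto_rpow_mul_exp_neg_mul_atTop_nhds_zero 1 η hη
  simpa only [sq, ← mul_assoc, one_mul] using
    (h.isBigO_one ℝ).mul (isBigO_refl (fun r => exp (-η * r)) atTop)

lemma pow_four_isBigO_exp_neg_mul_sq {f : ℝ → ℝ}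
    (hf : f =O[atTop] fun r => exp (-η * r)) :
    (fun r => f r ^ 4) =O[atTop] fun r => exp (-η * r) ^ 2 := by
  simpa only [← pow_add, mul_one, one_pow] using
    (hf.pow 2).mul ((hf.trans ((tendsto_exp_neg_mul_atTop hη).isBigO_one ℝ)).pow 2)

theorem integral_Ioi_pohozaev {u : ℝ → ℝ} {α : ℝ} (hu : ContDiff ℝ 2 u)
    (hu₀ : u =O[atTop] fun r => exp (-η * r)) (hu₁ : deriv u =O[atTop] fun r => exp (-η * r))
    (hint : IntegrableOn (fun r => r * deriv u r * (u r - deriv (deriv u) r - α * u r ^ 3))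
      (Ioi 0)) :
    (∫ r in Ioi 0, u r ^ 2) - (∫ r in Ioi 0, deriv u r ^ 2) - α / 2 * (∫ r in Ioi 0, u r ^ 4)
      + 2 * ∫ r in Ioi 0, r * deriv u r * (u r - deriv (deriv u) r - α * u r ^ 3) = 0 := by
  have hd₀ : Differentiable ℝ u := hu.differentiable two_ne_zero
  have hd₁ : Differentiable ℝ (deriv u) :=
    (contDiff_succ_iff_deriv.mp hu).2.2.differentiable one_ne_zero
  have hc₀ := hd₀.continuous
  have hc₁ := hd₁.continuous
  have hu₂ := hu₀.pow 2
  have hu'₂ := hu₁.pow 2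
  have hu₄ := pow_four_isBigO_exp_neg_mul_sq hη hu₀
  have integrable_of_isBigO {f : ℝ → ℝ} (hf : Continuous f)
      (ho : f =O[atTop] fun r => exp (-η * r) ^ 2) : IntegrableOn f (Ioi 0) :=
    integrable_of_isBigO_exp_neg hη hf.continuousOn (ho.trans (exp_neg_mul_sq_isBigO hη))
  have hi₂ := integrable_of_isBigO (by fun_prop) hu₂
  have hi'₂ := integrable_of_isBigO (by fun_prop) hu'₂
  have hi₄ := integrable_of_isBigO (by fun_prop) hu₄
  have hlim := (((isBigO_refl (fun r : ℝ => r) atTop).mul ((hu₂.sub hu'₂).sub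
    (hu₄.const_mul_left (α / 2)))).trans (id_mul_exp_neg_mul_sq_isBigO hη)).trans_tendsto
    (tendsto_exp_neg_mul_atTop hη)
  have h := integral_Ioi_of_hasDerivAt_of_tendsto'
    (fun r _ => hasDerivAt_id_mul_energy α (hd₀ r).hasDerivAt (hd₁ r).hasDerivAt)
    (((hi₂.fun_sub hi'₂).fun_sub (hi₄.const_mul _)).fun_add (hint.const_mul _)) hlim
  rw [integral_add ((hi₂.fun_sub hi'₂).fun_sub (hi₄.const_mul _)) (hint.const_mul _),
    integral_sub (hi₂.fun_sub hi'₂) (hi₄.const_mul _), integral_sub hi₂ hi'₂,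
    integral_const_mul, integral_const_mul] at h
  simpa using h

end ExpDecay

theorem system_U_pohozaev_general (α β : ℝ) (U V : ℝ → ℝ)
    (hU : ContDiff ℝ 2 U) (hV : ContDiff ℝ 2 V)
    (hUode : ∀ r : ℝ, -(deriv (deriv U) r) + U r
      = α * (U r) ^ 3 + β * U r * (V r) ^ 2)
    (hdecay : ∃ C > (0:ℝ), ∃ η > (0:ℝ), ∀ r : ℝ,
      |U r| + |deriv U r| + |V r| + |deriv V r| ≤ C * Real.exp (-η * |r|)) :
    -(∫ r in Set.Ioi (0:ℝ), |deriv U r| ^ 2)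
        + (∫ r in Set.Ioi (0:ℝ), (U r) ^ 2)
      = (1 / 2) * α * (∫ r in Set.Ioi (0:ℝ), (U r) ^ 4)
        - 2 * β * ∫ r in Set.Ioi (0:ℝ), r * U r * deriv U r * (V r) ^ 2 := by
  obtain ⟨C, -, η, hη, hdec⟩ := hdecay
  have hUO : U =O[atTop] fun r => exp (-η * r) := isBigO_exp_neg_mul_of_abs_le (C := C)
    fun r => by linarith [hdec r, abs_nonneg (deriv U r), abs_nonneg (V r), abs_nonneg (deriv V r)]
  have hU'O : deriv U =O[atTop] fun r => exp (-η * r) := isBigO_exp_neg_mul_of_abs_le (C := C)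
    fun r => by linarith [hdec r, abs_nonneg (U r), abs_nonneg (V r), abs_nonneg (deriv V r)]
  have hVO : V =O[atTop] fun r => exp (-η * r) := isBigO_exp_neg_mul_of_abs_le (C := C)
    fun r => by linarith [hdec r, abs_nonneg (U r), abs_nonneg (deriv U r), abs_nonneg (deriv V r)]
  have hremainder : (fun r => r * deriv U r * (U r - deriv (deriv U) r - α * U r ^ 3))
      = fun r => β * (r * U r * deriv U r * V r ^ 2) :=
    funext fun r => by linear_combination r * deriv U r * hUode r
  have hP : (fun r => r * U r * deriv U r * V r ^ 2) =O[atTop] fun r => r * exp (-η * r) ^ 2 := by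
    simpa only [mul_one, one_pow, ← sq, mul_assoc] using
      (((isBigO_refl (fun r : ℝ => r) atTop).mul hUO).mul hU'O).mul
        ((hVO.trans ((tendsto_exp_neg_mul_atTop hη).isBigO_one ℝ)).pow 2)
  have hU₁ := (hU.differentiable two_ne_zero).continuous
  have hU₂ := hU.continuous_deriv one_le_two
  have hV₀ := hV.continuous
  have hint : IntegrableOn (fun r => β * (r * U r * deriv U r * V r ^ 2)) (Ioi 0) :=
    (integrable_of_isBigO_exp_neg hη (by fun_prop)
      (hP.trans (id_mul_exp_neg_mul_sq_isBigO hη))).const_mul β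
  have h := integral_Ioi_pohozaev hη hU hUO hU'O (hremainder ▸ hint)
  rw [hremainder, integral_const_mul] at h
  simp only [sq_abs]
  linarith

theorem system_U_pohozaev (α β γ : ℝ) (U V : ℝ → ℝ)
    (hU : ContDiff ℝ 2 U) (hV : ContDiff ℝ 2 V)
    (hUeven : ∀ r : ℝ, U (-r) = U r) (hVeven : ∀ r : ℝ, V (-r) = V r)
    (hUode : ∀ r : ℝ, -(deriv (deriv U) r) + U r
      = α * (U r) ^ 3 + β * U r * (V r) ^ 2)
    (hVode : ∀ r : ℝ, -(deriv (deriv V) r) + V r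
      = γ * (V r) ^ 3 + β * (U r) ^ 2 * V r)
    (hdecay : ∃ C > (0:ℝ), ∃ η > (0:ℝ), ∀ r : ℝ,
      |U r| + |deriv U r| + |V r| + |deriv V r| ≤ C * Real.exp (-η * |r|)) :
    -(∫ r in Set.Ioi (0:ℝ), |deriv U r| ^ 2)
        + (∫ r in Set.Ioi (0:ℝ), (U r) ^ 2)
      = (1 / 2) * α * (∫ r in Set.Ioi (0:ℝ), (U r) ^ 4)
        - 2 * β * ∫ r in Set.Ioi (0:ℝ), r * U r * deriv U r * (V r) ^ 2 :=
  system_U_pohozaev_general α β U V hU hV hUode hdecay
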